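/- Let r > 0 and ρ(T) = r / log T. Let T(n) → ∞, u_n → ∞ be such that T(n)·μ(u_n) → θ ∈ (0,∞). For z ∈ ℝ define u_n^{(z)} = (u_n − ρ(T(n))^{1/2} z)/(1 − ρ(T(n)))^{1/2} and v_n^{(z)} = (u_n + ρ(T(n))^{1/2} z)/(1 − ρ(T(n)))^{1/2}. Then for every z ∈ ℝ, lim_{n→∞} T(n)·μ(u_n^{(z)}) = θ·e^{−r+√(2r)z} and lim_{n→∞} T(n)·μ(v_n^{(z)}) = θ·e^{−r−√(2r)z}. -/

import Mathlib

open MeasureTheory ProbabilityTheory Filter Set Asymptotics Topology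

noncomputable section

/-- The standard normal survival function `Ψ(u) = P(W > u)`. -/
def Psi (u : ℝ) : ℝ := ((gaussianReal 0 1) (Set.Ioi u)).toReal

/-- The standard normal distribution function `Φ`. -/
def Phi (u : ℝ) : ℝ := ((gaussianReal 0 1) (Set.Iic u)).toReal

/-- The standard normal density `φ`. -/
def stdPdf (z : ℝ) : ℝ := Real.exp (-z ^ 2 / 2) / Real.sqrt (2 * Real.pi)

/-- A family of random variables indexed by times in `S` is a centered Gaussian family
with covariance kernel `K` if every finite linear combination of its values is a centered
Gaussian random variable with the corresponding variance. -/
def IsGaussianFamilyOn {Ω : Type*} [MeasurableSpace Ω] (P : Measure Ω)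
    (X : ℝ → Ω → ℝ) (K : ℝ → ℝ → ℝ) (S : Set ℝ) : Prop :=
  ∀ (m : ℕ) (t : Fin m → ℝ), (∀ i, t i ∈ S) → ∀ c : Fin m → ℝ,
    Measure.map (fun ω => ∑ i, c i * X (t i) ω) P
      = gaussianReal 0 (∑ i, ∑ j, c i * c j * K (t i) (t j)).toNNReal

/-- A centered Gaussian family indexed by all of `ℝ`. -/
def IsGaussianFamily {Ω : Type*} [MeasurableSpace Ω] (P : Measure Ω)
    (X : ℝ → Ω → ℝ) (K : ℝ → ℝ → ℝ) : Prop :=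
  IsGaussianFamilyOn P X K Set.univ

/-- Covariance kernel of a fractional Brownian motion with `E B(t)² = |t|^α`
(a centered Gaussian process with stationary increments and `B(0) = 0`). -/
def fbmCov (α : ℝ) (s t : ℝ) : ℝ := (|s| ^ α + |t| ^ α - |s - t| ^ α) / 2

/-- `H_α(λ) = E[exp(max_{t∈[0,λ]}(√2 B_{α/2}(t) − t^α))]` for a given fBm `B`. -/
def pickandsFun {Ω : Type*} [MeasurableSpace Ω] (P : Measure Ω) (α : ℝ)
    (B : ℝ → Ω → ℝ) (lam : ℝ) : ℝ :=
  ∫ ω, Real.exp (⨆ t : Set.Icc (0:ℝ) lam, (Real.sqrt 2 * B (t : ℝ) ω - (t : ℝ) ^ α)) ∂P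

/-- `H` is the Pickands constant `H_α = lim_{λ→∞} H_α(λ)/λ`. -/
def IsPickandsConstant (α H : ℝ) : Prop :=
  ∃ (Ω : Type) (_ : MeasurableSpace Ω) (P : Measure Ω) (B : ℝ → Ω → ℝ),
    IsProbabilityMeasure P ∧ IsGaussianFamily P B (fbmCov α) ∧
    Tendsto (fun lam => pickandsFun P α B lam / lam) atTop (𝓝 H)

/-- `μ(u) = H_α u^{2/α} Ψ(u)`. -/
def muF (α H u : ℝ) : ℝ := H * u ^ (2 / α) * Psi u

/-- `a_T = √(2 log T)`. -/
def aT (T : ℝ) : ℝ := Real.sqrt (2 * Real.log T)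

/-- `b_T = √(2 log T) + log(H_α (2π)^{-1/2} (2 log T)^{-1/2+1/α}) / √(2 log T)`. -/
def bT (α H T : ℝ) : ℝ :=
  Real.sqrt (2 * Real.log T) +
    Real.log (H * (2 * Real.pi) ^ (-(1:ℝ) / 2) * (2 * Real.log T) ^ (-(1:ℝ) / 2 + 1 / α)) /
      Real.sqrt (2 * Real.log T)

/-- `Λ_r(x) = E[(Λ(x+r))^{e^{√(2r)W} + e^{-√(2r)W}}]`, `W` standard normal,
`Λ(x) = exp(-e^{-x})`. -/
def LambdaR (r x : ℝ) : ℝ :=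
  ∫ z : ℝ, (Real.exp (-Real.exp (-(x + r)))) ^
      (Real.exp (Real.sqrt (2 * r) * z) + Real.exp (-(Real.sqrt (2 * r) * z))) * stdPdf z

/-- Condition (A1): `r_n(t) = 1 − c_n|t|^α + ε_n(t)|t|^α` with `c_n → 1` and
`ε_n(t) → 0` as `t → 0` uniformly in `n`. -/
def CondA1 (R : ℕ → ℝ → ℝ) (α : ℝ) : Prop :=
  ∃ (c : ℕ → ℝ) (e : ℕ → ℝ → ℝ),
    (∀ n t, R n t = 1 - c n * |t| ^ α + e n t * |t| ^ α) ∧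
    Tendsto c atTop (𝓝 1) ∧
    ∀ δ > 0, ∃ η > 0, ∀ n, ∀ t : ℝ, t ≠ 0 → |t| < η → |e n t| < δ

/-- Condition (A2): for any `ε > 0` there is `γ ∈ (0,1)` with
`sup{|r_n(t)| : |t| ≥ ε, n ∈ ℕ} < γ`. -/
def CondA2 (R : ℕ → ℝ → ℝ) : Prop :=
  ∀ ε > 0, ∃ γ, 0 < γ ∧ γ < 1 ∧ ∀ n, ∀ t : ℝ, ε ≤ |t| → |R n t| < γ

/-- Condition (A3): `r_n(t) log t → 0` as `t → ∞`, uniformly in `n`. -/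
def CondA3 (R : ℕ → ℝ → ℝ) : Prop :=
  ∀ δ > 0, ∃ M : ℝ, ∀ n, ∀ t ≥ M, |R n t * Real.log t| < δ

/-- Condition (B1): `r_n(t) log t → r ∈ (0,∞)` as `t → ∞`, uniformly in `n`. -/
def CondB1 (R : ℕ → ℝ → ℝ) (r : ℝ) : Prop :=
  ∀ δ > 0, ∃ M : ℝ, ∀ n, ∀ t ≥ M, |R n t * Real.log t - r| < δ

/-- Condition (B2): `r_n(t) log t → ∞` as `t → ∞`, uniformly in `n`. -/
def CondB2 (R : ℕ → ℝ → ℝ) : Prop :=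
  ∀ M : ℝ, ∃ t₀ : ℝ, ∀ n, ∀ t ≥ t₀, M < R n t * Real.log t

/-- The union `∪_j I_j`, where each unit interval `[j-1, j]`, `j = 1, …, ⌊T⌋`, of `[0,T]`
is split into `I_j^ε = [j-1, j-1+ε]` followed by `I_j = [j-1+ε, j]`. -/
def unionIj (ε T : ℝ) : Set ℝ :=
  ⋃ j ∈ Finset.Icc 1 ⌊T⌋₊, Set.Icc ((j : ℝ) - 1 + ε) (j : ℝ)

/-- The event `{sup_{t∈I} |X(t)| ≤ u}`. -/
def supEventAbs {Ω : Type*} (Xn : ℝ → Ω → ℝ) (I : Set ℝ) (un : ℝ) : Set Ω :=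
  {ω | (⨆ t : I, |Xn (t : ℝ) ω|) ≤ un}

/-- The event `{sup_{t∈I} X(t) ≤ u}`. -/
def supEvent {Ω : Type*} (Xn : ℝ → Ω → ℝ) (I : Set ℝ) (un : ℝ) : Set Ω :=
  {ω | (⨆ t : I, Xn (t : ℝ) ω) ≤ un}

/-- The event `{max_{jq ∈ I} |X(jq)| ≤ u}` over the grid of spacing `q`. -/
def gridEventAbs {Ω : Type*} (Xn : ℝ → Ω → ℝ) (q : ℝ) (I : Set ℝ) (un : ℝ) : Set Ω :=
  {ω | ∀ j : ℤ, (j : ℝ) * q ∈ I → |Xn ((j : ℝ) * q) ω| ≤ un}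

/-- The event `{max_{jq ∈ I} X(jq) ≤ u}` over the grid of spacing `q`. -/
def gridEvent {Ω : Type*} (Xn : ℝ → Ω → ℝ) (q : ℝ) (I : Set ℝ) (un : ℝ) : Set Ω :=
  {ω | ∀ j : ℤ, (j : ℝ) * q ∈ I → Xn ((j : ℝ) * q) ω ≤ un}

/-- The event `{-v ≤ inf_{s∈I} X(s), sup_{s∈I} X(s) ≤ u}`. -/
def bandEvent {Ω : Type*} (Xn : ℝ → Ω → ℝ) (I : Set ℝ) (vn un : ℝ) : Set Ω :=
  {ω | -vn ≤ (⨅ s : I, Xn (s : ℝ) ω) ∧ (⨆ s : I, Xn (s : ℝ) ω) ≤ un}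

/-- The event `{-v ≤ min_{kq∈I} X(kq), max_{kq∈I} X(kq) ≤ u}` over the grid of spacing `q`. -/
def gridBandEvent {Ω : Type*} (Xn : ℝ → Ω → ℝ) (q : ℝ) (I : Set ℝ) (vn un : ℝ) : Set Ω :=
  {ω | ∀ k : ℤ, (k : ℝ) * q ∈ I → (-vn ≤ Xn ((k : ℝ) * q) ω ∧ Xn ((k : ℝ) * q) ω ≤ un)}

/-!
By the Mills ratio `Ψ(x) ~ φ(x)/x`, `μ(a)/μ(u) → e^{-c/2}` whenever `u → ∞`, `a/u → 1` and
`a² - u² → c`. Taking logarithms in `T μ(u) → θ` gives `log T ~ u²/2`, hence `u² ρ(T) → 2r`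
and `u ρ(T)^{1/2} → √(2r)`; for `a = (u + s)/(1 - ρ)^{1/2}` with `u s → m` this yields
`a² - u² → 2r + 2m`, and `T μ(a) = T μ(u) · μ(a)/μ(u) → θ e^{-r-m}` with `m = ∓√(2r) z`.
-/

lemma stdPdf_eq_gaussianPDFReal : stdPdf = gaussianPDFReal 0 1 := by
  ext x
  simp [stdPdf, gaussianPDFReal, div_eq_inv_mul]

lemma stdPdf_pos (x : ℝ) : 0 < stdPdf x := by
  rw [stdPdf_eq_gaussianPDFReal]
  exact gaussianPDFReal_pos 0 1 x one_ne_zero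

lemma integrableOn_stdPdf (s : Set ℝ) : IntegrableOn stdPdf s := by
  rw [stdPdf_eq_gaussianPDFReal]
  exact (integrable_gaussianPDFReal 0 1).integrableOn

lemma Psi_eq_integral (u : ℝ) : Psi u = ∫ x in Ioi u, stdPdf x := by
  rw [Psi, gaussianReal_apply_eq_integral 0 one_ne_zero, ENNReal.toReal_ofReal,
    stdPdf_eq_gaussianPDFReal]
  exact setIntegral_nonneg measurableSet_Ioi fun x _ => gaussianPDFReal_nonneg 0 1 x

lemma Psi_pos (u : ℝ) : 0 < Psi u := by
  rw [Psi_eq_integral, setIntegral_pos_iff_support_of_nonneg_ae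
    (ae_of_all _ fun x => (stdPdf_pos x).le) (integrableOn_stdPdf _)]
  simp [Function.support, (stdPdf_pos _).ne', Real.volume_Ioi]

lemma log_stdPdf (x : ℝ) :
    Real.log (stdPdf x) = -x ^ 2 / 2 - Real.log (Real.sqrt (2 * Real.pi)) := by
  rw [stdPdf, Real.log_div (Real.exp_ne_zero _) (by positivity), Real.log_exp]

lemma stdPdf_div_stdPdf (a u : ℝ) : stdPdf a / stdPdf u = Real.exp (-(a ^ 2 - u ^ 2) / 2) := by
  rw [stdPdf, stdPdf, div_div_div_cancel_right₀ (by positivity), ← Real.exp_sub]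
  ring_nf

lemma hasDerivAt_stdPdf_div_pow (k : ℕ) {x : ℝ} (hx : x ≠ 0) :
    HasDerivAt (fun y => stdPdf y / y ^ k) (-(x ^ 2 + k) * stdPdf x / x ^ (k + 1)) x := by
  have hexponent : HasDerivAt (fun y : ℝ => -y ^ 2 / 2) (-x) x :=
    ((hasDerivAt_pow 2 x).neg.div_const 2).congr_deriv (by ring)
  have hφ : HasDerivAt stdPdf (-x * stdPdf x) x :=
    (hexponent.exp.div_const _).congr_deriv (by simp only [stdPdf]; ring)
  refine (hφ.div (hasDerivAt_pow k x) (pow_ne_zero k hx)).congr_deriv ?_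
  rcases k with _ | k
  · field_simp; ring
  · simp only [Nat.add_sub_cancel]; field_simp; push_cast; ring

lemma tendsto_stdPdf_div_pow {k : ℕ} (hk : k ≠ 0) :
    Tendsto (fun x => stdPdf x / x ^ k) atTop (𝓝 0) := by
  have h : Tendsto (fun x : ℝ => -x ^ 2 / 2) atTop atBot := by
    simpa [neg_div] using ((tendsto_pow_atTop two_ne_zero).atTop_div_const (two_pos (α := ℝ)))
  have hφ : Tendsto stdPdf atTop (𝓝 0) := by
    have := (Real.tendsto_exp_atBot.comp h).div_const (Real.sqrt (2 * Real.pi))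
    rwa [zero_div] at this
  simpa [div_eq_mul_inv] using hφ.mul (tendsto_inv_atTop_zero.comp (tendsto_pow_atTop hk))

lemma Psi_le_stdPdf_div {u : ℝ} (hu : 0 < u) : Psi u ≤ stdPdf u / u := by
  have hderiv : ∀ x ∈ Ici u, HasDerivAt (fun y => -(stdPdf y / y ^ 1))
      ((x ^ 2 + 1) * stdPdf x / x ^ 2) x := fun x hx =>
    (hasDerivAt_stdPdf_div_pow 1 (lt_of_lt_of_le hu hx).ne').neg.congr_deriv (by push_cast; ring)
  have hnonneg : ∀ x ∈ Ioi u, 0 ≤ (x ^ 2 + 1) * stdPdf x / x ^ 2 := fun x _ =>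
    by have := stdPdf_pos x; positivity
  have hlim : Tendsto (fun y => -(stdPdf y / y ^ 1)) atTop (𝓝 0) := by
    simpa using (tendsto_stdPdf_div_pow one_ne_zero).neg
  calc Psi u = ∫ x in Ioi u, stdPdf x := Psi_eq_integral u
    _ ≤ ∫ x in Ioi u, (x ^ 2 + 1) * stdPdf x / x ^ 2 := by
      refine setIntegral_mono_on (integrableOn_stdPdf _)
        (integrableOn_Ioi_deriv_of_nonneg' hderiv hnonneg hlim) measurableSet_Ioi fun x hx => ?_
      have hx : 0 < x := hu.trans hx
      rw [le_div_iff₀ (by positivity)]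
      nlinarith [stdPdf_pos x]
    _ = stdPdf u / u := by
      rw [integral_Ioi_of_hasDerivAt_of_nonneg' hderiv hnonneg hlim]; simp

lemma stdPdf_div_sub_le_Psi {u : ℝ} (hu : 2 ≤ u) :
    stdPdf u / u - stdPdf u / u ^ 3 ≤ Psi u := by
  have hderiv : ∀ x ∈ Ici u, HasDerivAt (fun y => -(stdPdf y / y ^ 1 - stdPdf y / y ^ 3))
      ((x ^ 4 - 3) * stdPdf x / x ^ 4) x := fun x hx => by
    have hx : x ≠ 0 := by linarith [mem_Ici.1 hx]
    refine ((hasDerivAt_stdPdf_div_pow 1 hx).sub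
      (hasDerivAt_stdPdf_div_pow 3 hx)).neg.congr_deriv ?_
    field_simp; push_cast; ring
  have hnonneg : ∀ x ∈ Ioi u, 0 ≤ (x ^ 4 - 3) * stdPdf x / x ^ 4 := fun x hx => by
    have h16 : (2 : ℝ) ^ 4 ≤ x ^ 4 := pow_le_pow_left₀ (by norm_num) (hu.trans hx.le) 4
    have : 0 ≤ x ^ 4 - 3 := by linarith
    have := stdPdf_pos x
    positivity
  have hlim : Tendsto (fun y => -(stdPdf y / y ^ 1 - stdPdf y / y ^ 3)) atTop (𝓝 0) := by
    simpa using
      ((tendsto_stdPdf_div_pow one_ne_zero).sub (tendsto_stdPdf_div_pow three_ne_zero)).neg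
  calc stdPdf u / u - stdPdf u / u ^ 3 = ∫ x in Ioi u, (x ^ 4 - 3) * stdPdf x / x ^ 4 := by
        rw [integral_Ioi_of_hasDerivAt_of_nonneg' hderiv hnonneg hlim]; simp
    _ ≤ ∫ x in Ioi u, stdPdf x := by
      refine setIntegral_mono_on (integrableOn_Ioi_deriv_of_nonneg' hderiv hnonneg hlim)
        (integrableOn_stdPdf _) measurableSet_Ioi fun x hx => ?_
      have hx : 0 < x := by linarith [mem_Ioi.1 hx]
      rw [div_le_iff₀ (by positivity)]
      nlinarith [stdPdf_pos x]
    _ = Psi u := (Psi_eq_integral u).symm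

lemma isEquivalent_Psi : Psi ~[atTop] fun x => stdPdf x / x := by
  refine isEquivalent_of_tendsto_one ?_
  have hlower : Tendsto (fun x : ℝ => 1 - 1 / x ^ 2) atTop (𝓝 1) := by
    simpa using (tendsto_const_nhds (x := (1 : ℝ))).sub
      (tendsto_inv_atTop_zero.comp (tendsto_pow_atTop (α := ℝ) two_ne_zero))
  refine tendsto_of_tendsto_of_tendsto_of_le_of_le' hlower tendsto_const_nhds ?_ ?_
  · filter_upwards [eventually_ge_atTop 2] with x hx
    have hx0 : 0 < x := by linarith
    have := stdPdf_pos x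
    rw [Pi.div_apply, le_div_iff₀ (by positivity)]
    calc (1 - 1 / x ^ 2) * (stdPdf x / x) = stdPdf x / x - stdPdf x / x ^ 3 := by
          field_simp
      _ ≤ Psi x := stdPdf_div_sub_le_Psi hx
  · filter_upwards [eventually_gt_atTop 0] with x hx
    have := stdPdf_pos x
    rw [Pi.div_apply, div_le_one (by positivity)]
    exact Psi_le_stdPdf_div hx

lemma isEquivalent_muF (α H : ℝ) :
    muF α H ~[atTop] fun x => H * x ^ (2 / α) * (stdPdf x / x) :=
  IsEquivalent.refl.mul isEquivalent_Psi

lemma muF_ne_zero {α H x : ℝ} (hH : H ≠ 0) (hx : 0 < x) : muF α H x ≠ 0 := by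
  have := Psi_pos x
  have := Real.rpow_pos_of_pos hx (2 / α)
  unfold muF
  positivity

lemma tendsto_log_div_sq_atTop : Tendsto (fun x => Real.log x / x ^ 2) atTop (𝓝 0) := by
  simpa [Real.rpow_two] using
    (isLittleO_log_rpow_atTop (r := 2) two_pos).tendsto_div_nhds_zero

section

variable {ι : Type*} {l : Filter ι} {α H c θ κ m : ℝ} {T u a ρ s : ι → ℝ}

lemma tendsto_muF_div_muF (hH : H ≠ 0) (hu : Tendsto u l atTop)
    (hau : Tendsto (fun i => a i / u i) l (𝓝 1))
    (hc : Tendsto (fun i => a i ^ 2 - u i ^ 2) l (𝓝 c)) :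
    Tendsto (fun i => muF α H (a i) / muF α H (u i)) l (𝓝 (Real.exp (-c / 2))) := by
  have ha : Tendsto a l atTop := by
    refine (hau.pos_mul_atTop (one_pos (α := ℝ)) hu).congr' ?_
    filter_upwards [hu.eventually_gt_atTop 0] with i hi
    exact div_mul_cancel₀ _ hi.ne'
  refine (((isEquivalent_muF α H).comp_tendsto ha).div
    ((isEquivalent_muF α H).comp_tendsto hu)).symm.tendsto_nhds ?_
  have hlim : Tendsto (fun i => (a i / u i) ^ (2 / α) * (a i / u i)⁻¹ *
      Real.exp (-(a i ^ 2 - u i ^ 2) / 2)) l (𝓝 (1 ^ (2 / α) * 1⁻¹ * Real.exp (-c / 2))) :=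
    ((hau.rpow_const (Or.inl one_ne_zero)).mul (hau.inv₀ one_ne_zero)).mul
      ((hc.neg.div_const 2).rexp)
  rw [Real.one_rpow, inv_one, one_mul, one_mul] at hlim
  refine hlim.congr' ?_
  filter_upwards [hu.eventually_gt_atTop 0, ha.eventually_gt_atTop 0] with i hui hai
  have := stdPdf_pos (u i)
  have := Real.rpow_pos_of_pos hui (2 / α)
  simp only [Function.comp_apply, Pi.div_apply]
  rw [Real.div_rpow hai.le hui.le, ← stdPdf_div_stdPdf]
  field_simp

lemma tendsto_nhds_zero_of_mul_atTop {f g : ι → ℝ} (hg : Tendsto g l atTop)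
    (h : Tendsto (fun i => g i * f i) l (𝓝 c)) : Tendsto f l (𝓝 0) := by
  refine (h.div_atTop hg).congr' ?_
  filter_upwards [hg.eventually_gt_atTop 0] with i hi
  field_simp

lemma tendsto_log_div_sq (hH : H ≠ 0) (hθ : θ ≠ 0) (hu : Tendsto u l atTop)
    (hlim : Tendsto (fun i => T i * muF α H (u i)) l (𝓝 θ)) :
    Tendsto (fun i => Real.log (T i) / u i ^ 2) l (𝓝 (1 / 2)) := by
  have hg : Tendsto (fun i => T i * (H * u i ^ (2 / α) * (stdPdf (u i) / u i))) l (𝓝 θ) :=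
    (IsEquivalent.refl.mul ((isEquivalent_muF α H).comp_tendsto hu)).tendsto_nhds hlim
  have hu2 : Tendsto (fun i => u i ^ 2) l atTop := (tendsto_pow_atTop two_ne_zero).comp hu
  have hrest : Tendsto (fun i =>
      (Real.log (T i * (H * u i ^ (2 / α) * (stdPdf (u i) / u i))) - Real.log H
        + Real.log (Real.sqrt (2 * Real.pi))) / u i ^ 2
      + (1 - 2 / α) * (Real.log (u i) / u i ^ 2) + 1 / 2) l (𝓝 (0 + (1 - 2 / α) * 0 + 1 / 2)) :=
    ((((hg.log hθ).sub_const _).add_const _).div_atTop hu2).add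
      ((tendsto_log_div_sq_atTop.comp hu).const_mul _) |>.add_const _
  rw [mul_zero, zero_add, zero_add] at hrest
  refine hrest.congr' ?_
  filter_upwards [hu.eventually_gt_atTop 0, hg.eventually_ne hθ] with i hui hTg
  have hT : T i ≠ 0 := left_ne_zero_of_mul hTg
  have := stdPdf_pos (u i)
  have := Real.rpow_pos_of_pos hui (2 / α)
  -- `log (T H u^{2/α} φ(u)/u) = log T + log H + (2/α - 1) log u - u²/2 - log √(2π)`
  rw [Real.log_mul hT (by positivity), Real.log_mul (by positivity) (by positivity),
    Real.log_mul hH (by positivity), Real.log_rpow hui, Real.log_div (by positivity) hui.ne',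
    log_stdPdf]
  field_simp
  ring

lemma tendsto_shift_div_self (hu : Tendsto u l atTop)
    (hρ : Tendsto (fun i => u i ^ 2 * ρ i) l (𝓝 κ)) (hs : Tendsto (fun i => u i * s i) l (𝓝 m)) :
    Tendsto (fun i => (u i + s i) / Real.sqrt (1 - ρ i) / u i) l (𝓝 1) := by
  have hρ0 := tendsto_nhds_zero_of_mul_atTop ((tendsto_pow_atTop two_ne_zero).comp hu) hρ
  have hs0 := tendsto_nhds_zero_of_mul_atTop hu hs
  have hlim : Tendsto (fun i => (1 + s i / u i) / Real.sqrt (1 - ρ i)) l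
      (𝓝 ((1 + 0) / Real.sqrt (1 - 0))) :=
    (tendsto_const_nhds.add (hs0.div_atTop hu)).div
      ((tendsto_const_nhds.sub hρ0).sqrt) (by norm_num)
  rw [add_zero, sub_zero, Real.sqrt_one, div_one] at hlim
  refine hlim.congr' ?_
  filter_upwards [hu.eventually_gt_atTop 0] with i hi
  field_simp

lemma tendsto_shift_sq_sub_sq (hu : Tendsto u l atTop)
    (hρ : Tendsto (fun i => u i ^ 2 * ρ i) l (𝓝 κ)) (hs : Tendsto (fun i => u i * s i) l (𝓝 m)) :
    Tendsto (fun i => ((u i + s i) / Real.sqrt (1 - ρ i)) ^ 2 - u i ^ 2) l (𝓝 (κ + 2 * m)) := by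
  have hρ0 := tendsto_nhds_zero_of_mul_atTop ((tendsto_pow_atTop two_ne_zero).comp hu) hρ
  have hs0 := tendsto_nhds_zero_of_mul_atTop hu hs
  have hlim : Tendsto (fun i => (u i ^ 2 * ρ i + 2 * (u i * s i) + s i ^ 2) / (1 - ρ i)) l
      (𝓝 ((κ + 2 * m + 0 ^ 2) / (1 - 0))) :=
    ((hρ.add (hs.const_mul 2)).add (hs0.pow 2)).div (tendsto_const_nhds.sub hρ0) (by norm_num)
  rw [sub_zero, div_one, zero_pow two_ne_zero, add_zero] at hlim
  refine hlim.congr' ?_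
  filter_upwards [hρ0.eventually (gt_mem_nhds one_pos)] with i hi
  rw [div_pow, Real.sq_sqrt (by linarith)]
  field_simp
  ring

lemma tendsto_mul_muF_shift (hH : H ≠ 0) (hu : Tendsto u l atTop)
    (hlim : Tendsto (fun i => T i * muF α H (u i)) l (𝓝 θ))
    (hρ : Tendsto (fun i => u i ^ 2 * ρ i) l (𝓝 κ)) (hs : Tendsto (fun i => u i * s i) l (𝓝 m)) :
    Tendsto (fun i => T i * muF α H ((u i + s i) / Real.sqrt (1 - ρ i))) l
      (𝓝 (θ * Real.exp (-(κ + 2 * m) / 2))) := by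
  refine (hlim.mul (tendsto_muF_div_muF (α := α) hH hu (tendsto_shift_div_self hu hρ hs)
    (tendsto_shift_sq_sub_sq hu hρ hs))).congr' ?_
  filter_upwards [hu.eventually_gt_atTop 0] with i hi
  rw [mul_assoc, mul_div_cancel₀ _ (muF_ne_zero hH hi)]

end

theorem statement15_general (α H r θ : ℝ) (hH : 0 < H) (hθ : 0 < θ) (T u : ℕ → ℝ)
    (hu : Tendsto u atTop atTop)
    (hlim : Tendsto (fun n => T n * muF α H (u n)) atTop (𝓝 θ)) :
    ∀ z : ℝ,
      Tendsto (fun n => T n * muF α H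
            ((u n - Real.sqrt (r / Real.log (T n)) * z) / Real.sqrt (1 - r / Real.log (T n))))
          atTop (𝓝 (θ * Real.exp (-r + Real.sqrt (2 * r) * z))) ∧
        Tendsto (fun n => T n * muF α H
            ((u n + Real.sqrt (r / Real.log (T n)) * z) / Real.sqrt (1 - r / Real.log (T n))))
          atTop (𝓝 (θ * Real.exp (-r - Real.sqrt (2 * r) * z))) := by
  intro z
  have hlog := tendsto_log_div_sq hH.ne' hθ.ne' hu hlim
  have hρ : Tendsto (fun n => u n ^ 2 * (r / Real.log (T n))) atTop (𝓝 (2 * r)) := by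
    have h := (tendsto_const_nhds (x := r)).div hlog (by norm_num)
    rw [show r / (1 / 2) = 2 * r by ring] at h
    exact h.congr fun n => by simp only [Pi.div_apply, div_div_eq_mul_div]; ring
  have hsqrt : Tendsto (fun n => u n * Real.sqrt (r / Real.log (T n))) atTop
      (𝓝 (Real.sqrt (2 * r))) := by
    refine hρ.sqrt.congr' ?_
    filter_upwards [hu.eventually_ge_atTop 0] with n hn
    rw [Real.sqrt_mul (sq_nonneg _), Real.sqrt_sq hn]
  constructor
  · have h := tendsto_mul_muF_shift (s := fun n => -(Real.sqrt (r / Real.log (T n)) * z))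
      hH.ne' hu hlim hρ (by simpa only [mul_neg, mul_assoc] using (hsqrt.mul_const z).neg)
    rw [show -(2 * r + 2 * -(Real.sqrt (2 * r) * z)) / 2 = -r + Real.sqrt (2 * r) * z by ring] at h
    simpa only [← sub_eq_add_neg] using h
  · have h := tendsto_mul_muF_shift (s := fun n => Real.sqrt (r / Real.log (T n)) * z)
      hH.ne' hu hlim hρ (by simpa only [mul_assoc] using hsqrt.mul_const z)
    rwa [show -(2 * r + 2 * (Real.sqrt (2 * r) * z)) / 2 = -r - Real.sqrt (2 * r) * z by ring] at h

/-- With `ρ(T) = r/log T`, `T(n) → ∞`, `u_n → ∞` and `T(n)μ(u_n) → θ ∈ (0,∞)`,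
for `u_n^{(z)} = (u_n − ρ(T(n))^{1/2}z)/(1 − ρ(T(n)))^{1/2}` and
`v_n^{(z)} = (u_n + ρ(T(n))^{1/2}z)/(1 − ρ(T(n)))^{1/2}`:
`T(n)μ(u_n^{(z)}) → θe^{−r+√(2r)z}` and `T(n)μ(v_n^{(z)}) → θe^{−r−√(2r)z}`. -/
theorem statement15 (α H r θ : ℝ) (hα0 : 0 < α) (hα2 : α ≤ 2) (hH : 0 < H)
    (hr : 0 < r) (hθ : 0 < θ) (T u : ℕ → ℝ)
    (hT : Tendsto T atTop atTop) (hu : Tendsto u atTop atTop)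
    (hlim : Tendsto (fun n => T n * muF α H (u n)) atTop (𝓝 θ)) :
    ∀ z : ℝ,
      Tendsto (fun n => T n * muF α H
            ((u n - Real.sqrt (r / Real.log (T n)) * z) / Real.sqrt (1 - r / Real.log (T n))))
          atTop (𝓝 (θ * Real.exp (-r + Real.sqrt (2 * r) * z))) ∧
        Tendsto (fun n => T n * muF α H
            ((u n + Real.sqrt (r / Real.log (T n)) * z) / Real.sqrt (1 - r / Real.log (T n))))
          atTop (𝓝 (θ * Real.exp (-r - Real.sqrt (2 * r) * z))) :=
  statement15_general α H r θ hH hθ T u hu hlim
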